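/- Let C be a field and R = C[λ, μ_1, ..., μ_{t-1}] with a monomial order in which the leading monomial of each R_{i,j} := μ_i μ_j − L_{i,j}(λ, μ̄) is μ_i μ_j, where each L_{i,j} is linear in the μ variables. Let I be the ideal generated by the set B = {R_{i,j} : 1 ≤ i ≤ j ≤ t−1}. Suppose that every element of I that is linear in μ_1, ..., μ_{t-1} (total degree at most 1 in these variables) is zero. Then the leading ideal of I is generated by the monomials {μ_i μ_j : 1 ≤ i ≤ j ≤ t−1}; that is, B is a Gröbner basis of I. -/

import Mathlib

open MvPolynomial

/-- A polynomial in `C[λ, μ₁, …, μ_s]` (with variables indexed by `Option (Fin s)`: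
`none ↦ λ`, `some i ↦ μᵢ`) is *linear in the `μ` variables* if every monomial has total
degree at most `1` in the `μ` variables. -/
def LinearInMu {C : Type*} [CommSemiring C] {s : ℕ}
    (p : MvPolynomial (Option (Fin s)) C) : Prop :=
  ∀ c ∈ p.support, (∑ i : Fin s, c (some i)) ≤ 1

/-- The leading monomial (exponent) of a multivariate polynomial with respect to a
monomial order. -/
noncomputable def leadMon {σ : Type*} (m : MonomialOrder σ) {C : Type*} [CommSemiring C]
    (p : MvPolynomial σ C) : σ →₀ ℕ :=
  m.toSyn.symm (p.support.sup fun c => m.toSyn c)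

lemma leadMon_mem {σ C : Type*} [CommSemiring C] (m : MonomialOrder σ)
    {p : MvPolynomial σ C} (hp : p ≠ 0) : leadMon m p ∈ p.support := by
  obtain ⟨c, hc, hsup⟩ := Finset.exists_mem_eq_sup p.support
    (by simpa [MvPolynomial.support_eq_empty] using hp) (fun c => m.toSyn c)
  rw [leadMon, hsup, AddEquiv.symm_apply_apply]
  exact hc

lemma le_leadMon {σ C : Type*} [CommSemiring C] (m : MonomialOrder σ)
    {p : MvPolynomial σ C} {c : σ →₀ ℕ} (hc : c ∈ p.support) :
    m.toSyn c ≤ m.toSyn (leadMon m p) := by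
  rw [leadMon, AddEquiv.apply_symm_apply]
  exact Finset.le_sup hc

lemma leadMon_eq {σ C : Type*} [CommSemiring C] (m : MonomialOrder σ)
    {p : MvPolynomial σ C} {d : σ →₀ ℕ} (hd : d ∈ p.support)
    (h : ∀ c ∈ p.support, m.toSyn c ≤ m.toSyn d) : leadMon m p = d := by
  rw [leadMon]
  have : (p.support.sup fun c => m.toSyn c) = m.toSyn d :=
    le_antisymm (Finset.sup_le h) (Finset.le_sup hd)
  rw [this, AddEquiv.symm_apply_apply]

def muDeg {s : ℕ} (c : Option (Fin s) →₀ ℕ) : ℕ := ∑ i : Fin s, c (some i)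

lemma muDeg_pair {s : ℕ} (i j : Fin s) :
    muDeg (Finsupp.single (some i) 1 + Finsupp.single (some j) 1) = 2 := by
  simp [muDeg, Finsupp.single_apply, Finset.sum_add_distrib, Finset.sum_ite_eq]

lemma pair_le_of_ne {s : ℕ} {i j : Fin s} {c : Option (Fin s) →₀ ℕ} (hij : i ≠ j)
    (hi : 1 ≤ c (some i)) (hj : 1 ≤ c (some j)) :
    Finsupp.single (some i) 1 + Finsupp.single (some j) 1 ≤ c := by
  rw [Finsupp.le_def]
  intro a
  rcases eq_or_ne a (some i) with rfl | hai
  · have : (some j : Option (Fin s)) ≠ some i := by simpa [eq_comm] using hij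
    simpa [Finsupp.single_apply, this] using hi
  · rcases eq_or_ne a (some j) with rfl | haj
    · have : (some i : Option (Fin s)) ≠ some j := by simpa using hij
      simpa [Finsupp.single_apply, this] using hj
    · simp [Finsupp.single_apply, Ne.symm hai, Ne.symm haj]

lemma sq_le_of_two {s : ℕ} {i : Fin s} {c : Option (Fin s) →₀ ℕ}
    (hi : 2 ≤ c (some i)) :
    Finsupp.single (some i) 1 + Finsupp.single (some i) 1 ≤ c := by
  rw [Finsupp.le_def]
  intro a
  rcases eq_or_ne a (some i) with rfl | hai
  · simpa [Finsupp.single_apply] using hi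
  · simp [Finsupp.single_apply, Ne.symm hai]

lemma exists_div {s : ℕ} {c : Option (Fin s) →₀ ℕ} (hc : 2 ≤ muDeg c) :
    ∃ i j : Fin s, i ≤ j ∧ Finsupp.single (some i) 1 + Finsupp.single (some j) 1 ≤ c := by
  by_cases h : ∃ i, 2 ≤ c (some i)
  · obtain ⟨i, hi⟩ := h
    exact ⟨i, i, le_refl i, sq_le_of_two hi⟩
  · push_neg at h
    set T : Finset (Fin s) := Finset.univ.filter (fun i => 1 ≤ c (some i)) with hT
    have hcard : 2 ≤ T.card := by
      have hle : muDeg c ≤ T.card := by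
        have : ∀ i : Fin s, c (some i) = if i ∈ T then 1 else 0 := by
          intro i
          have hhi := h i
          simp only [hT, Finset.mem_filter, Finset.mem_univ, true_and]
          by_cases hi : 1 ≤ c (some i) <;> simp only [hi, if_true, if_false] <;> omega
        calc muDeg c = ∑ i : Fin s, if i ∈ T then 1 else 0 := by
              simp only [muDeg]; exact Finset.sum_congr rfl (fun i _ => this i)
          _ = T.card := by
              rw [Finset.sum_ite_mem, Finset.univ_inter]
              exact (Finset.card_eq_sum_ones T).symm
          _ ≤ T.card := le_rfl
      omega
    have h2 : 1 < T.card := by omega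
    obtain ⟨i, j, hi, hj, hij⟩ := Finset.one_lt_card_iff.mp h2
    have hi1 : 1 ≤ c (some i) := (Finset.mem_filter.mp hi).2
    have hj1 : 1 ≤ c (some j) := (Finset.mem_filter.mp hj).2
    rcases le_total i j with hle | hle
    · exact ⟨i, j, hle, pair_le_of_ne hij hi1 hj1⟩
    · exact ⟨j, i, hle, pair_le_of_ne (Ne.symm hij) hj1 hi1⟩

/-- If `I` is generated by `B = {R i j = μᵢμⱼ − L i j : i ≤ j}` with each
`L i j` linear in the `μ` variables and leading monomial of `R i j` equal to `μᵢμⱼ`, and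
every element of `I` linear in the `μ` variables is zero, then the leading ideal of `I` is
generated by the monomials `μᵢμⱼ`; that is, `B` is a Gröbner basis of `I`. -/
theorem groebner_basis_of_bc_relations {C : Type*} [Field C] (s : ℕ)
    (m : MonomialOrder (Option (Fin s)))
    (R L : Fin s → Fin s → MvPolynomial (Option (Fin s)) C)
    (hLlin : ∀ i j : Fin s, LinearInMu (L i j))
    (hR : ∀ i j : Fin s, R i j = X (some i) * X (some j) - L i j)
    (hlead : ∀ i j : Fin s,
      leadMon m (R i j) = Finsupp.single (some i) 1 + Finsupp.single (some j) 1)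
    (I : Ideal (MvPolynomial (Option (Fin s)) C))
    (hI : I = Ideal.span {q | ∃ i j : Fin s, i ≤ j ∧ q = R i j})
    (hlin : ∀ p ∈ I, LinearInMu p → p = 0) :
    Ideal.span {q : MvPolynomial (Option (Fin s)) C |
        ∃ p ∈ I, p ≠ 0 ∧ q = MvPolynomial.monomial (leadMon m p) (1 : C)} =
      Ideal.span {q : MvPolynomial (Option (Fin s)) C |
        ∃ i j : Fin s, i ≤ j ∧ q = X (some i) * X (some j)} := by
  classical
  have hXX : ∀ i j : Fin s, X (some i) * X (some j) =
      monomial (Finsupp.single (some i : Option (Fin s)) 1 + Finsupp.single (some j) 1)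
        (1 : C) := by
    intro i j
    rw [MvPolynomial.X, MvPolynomial.X, monomial_mul, one_mul]
  have hcoeffR : ∀ i j : Fin s,
      MvPolynomial.coeff (Finsupp.single (some i) 1 + Finsupp.single (some j) 1) (R i j)
        = 1 := by
    intro i j
    have hL : MvPolynomial.coeff
        (Finsupp.single (some i) 1 + Finsupp.single (some j) 1) (L i j) = 0 := by
      by_contra h
      have hm := hLlin i j _ (MvPolynomial.mem_support_iff.mpr h)
      have h2 := muDeg_pair i j
      simp only [muDeg] at h2
      omega
    rw [hR i j, MvPolynomial.coeff_sub, hXX i j, MvPolynomial.coeff_monomial,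
      if_pos rfl, hL, sub_zero]
  have hRne : ∀ i j : Fin s, R i j ≠ 0 := by
    intro i j h
    have := hcoeffR i j
    rw [h] at this
    simp at this
  have hRsupple : ∀ i j : Fin s, ∀ d ∈ (R i j).support,
      m.toSyn d ≤ m.toSyn (Finsupp.single (some i) 1 + Finsupp.single (some j) 1) := by
    intro i j d hd
    rw [← hlead i j]
    exact le_leadMon m hd
  have hRI : ∀ i j : Fin s, i ≤ j → R i j ∈ I := by
    intro i j hij
    rw [hI]
    exact Ideal.subset_span ⟨i, j, hij, rfl⟩
  have key : ∀ N : m.syn, ∀ p : MvPolynomial (Option (Fin s)) C,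
      ((p.support.filter fun c => 2 ≤ muDeg c).sup m.toSyn) = N →
      p ∈ I → p ≠ 0 → 2 ≤ muDeg (leadMon m p) := by
    intro N
    refine WellFounded.induction m.wf.wf
      (C := fun N => ∀ p : MvPolynomial (Option (Fin s)) C,
        ((p.support.filter fun c => 2 ≤ muDeg c).sup m.toSyn) = N →
        p ∈ I → p ≠ 0 → 2 ≤ muDeg (leadMon m p)) N ?_
    clear N
    intro N ih p hsup hpI hp0
    by_contra hcon
    push_neg at hcon
    set S := p.support.filter (fun c => 2 ≤ muDeg c) with hS
    rcases S.eq_empty_or_nonempty with hSe | hSne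
    · apply hp0
      apply hlin p hpI
      intro c hc
      have hns : c ∉ S := by rw [hSe]; exact Finset.notMem_empty c
      rw [hS, Finset.mem_filter] at hns
      push_neg at hns
      have h2 := hns hc
      change muDeg c ≤ 1
      omega
    · obtain ⟨c, hcS, hcsup⟩ := Finset.exists_mem_eq_sup S hSne m.toSyn
      rw [hS, Finset.mem_filter] at hcS
      obtain ⟨i, j, hij, hec⟩ := exists_div hcS.2
      set e := Finsupp.single (some i : Option (Fin s)) 1 + Finsupp.single (some j) 1
        with he
      set k := MvPolynomial.coeff c p with hk
      have hk0 : k ≠ 0 := MvPolynomial.mem_support_iff.mp hcS.1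
      set g := monomial (c - e) k * R i j with hg
      have hgI : g ∈ I := Ideal.mul_mem_left _ _ (hRI i j hij)
      have hce : (c - e) + e = c := tsub_add_cancel_of_le hec
      have hgc : MvPolynomial.coeff c g = k := by
        have h := MvPolynomial.coeff_monomial_mul e (c - e) k (R i j)
        rw [hce, hcoeffR i j, mul_one] at h
        rw [hg, h]
      have hgsupp : ∀ d' ∈ g.support, ∃ d ∈ (R i j).support, d' = (c - e) + d := by
        intro d' hd'
        have hmem := MvPolynomial.support_mul _ _ hd'
        rw [Finset.mem_add] at hmem
        obtain ⟨a, ha, b, hb, hab⟩ := hmem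
        have ha' : a = c - e := by
          rw [MvPolynomial.support_monomial] at ha
          simp [hk0] at ha
          exact ha
        exact ⟨b, hb, by rw [← hab, ha']⟩
      have hgle : ∀ d' ∈ g.support, d' = c ∨ m.toSyn d' < m.toSyn c := by
        intro d' hd'
        obtain ⟨d, hd, rfl⟩ := hgsupp d' hd'
        rcases eq_or_ne d e with rfl | hde
        · left; exact hce
        · right
          have h1 : m.toSyn d < m.toSyn e :=
            lt_of_le_of_ne (hRsupple i j d hd) (fun h => hde (m.toSyn.injective h))
          calc m.toSyn ((c - e) + d) = m.toSyn (c - e) + m.toSyn d := map_add _ _ _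
            _ < m.toSyn (c - e) + m.toSyn e := add_lt_add_right h1 _
            _ = m.toSyn ((c - e) + e) := (map_add _ _ _).symm
            _ = m.toSyn c := by rw [hce]
      set p' := p - g with hp'
      have hp'I : p' ∈ I := Ideal.sub_mem I hpI hgI
      have hp'c : MvPolynomial.coeff c p' = 0 := by
        rw [hp', MvPolynomial.coeff_sub, hgc, ← hk, sub_self]
      have hp'supp : p'.support ⊆ p.support ∪ g.support :=
        MvPolynomial.support_sub _ p g
      by_cases hp'0 : p' = 0
      · have hpg : p = g := by rwa [hp', sub_eq_zero] at hp'0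
        have hlm : leadMon m p = c := by
          apply leadMon_eq m hcS.1
          intro d hd
          rw [hpg] at hd
          rcases hgle d hd with rfl | hlt
          · exact le_rfl
          · exact hlt.le
        rw [hlm] at hcon
        omega
      · have hlpm := leadMon_mem m hp0
        have hlc : m.toSyn c < m.toSyn (leadMon m p) := by
          refine lt_of_le_of_ne (le_leadMon m hcS.1) (fun h => ?_)
          have h2 := m.toSyn.injective h
          rw [← h2] at hcon
          omega
        have hlng : leadMon m p ∉ g.support := by
          intro h
          rcases hgle _ h with h1 | h1
          · rw [h1] at hlc; exact lt_irrefl _ hlc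
          · exact lt_asymm hlc h1
        have hlp' : leadMon m p ∈ p'.support := by
          rw [MvPolynomial.mem_support_iff, hp', MvPolynomial.coeff_sub,
            MvPolynomial.notMem_support_iff.mp hlng, sub_zero]
          exact MvPolynomial.mem_support_iff.mp hlpm
        have hlead' : leadMon m p' = leadMon m p := by
          apply leadMon_eq m hlp'
          intro d hd
          rcases Finset.mem_union.mp (hp'supp hd) with h1 | h1
          · exact le_leadMon m h1
          · rcases hgle d h1 with rfl | h2
            · exact hlc.le
            · exact le_of_lt (h2.trans hlc)
        have hNc : N = m.toSyn c := by rw [← hsup]; exact hcsup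
        have hbot : (⊥ : m.syn) < m.toSyn c := by
          have hc0 : c ≠ 0 := by
            intro h
            rw [h] at hcS
            simp [muDeg] at hcS
          have hpos : (0 : Option (Fin s) →₀ ℕ) < c :=
            lt_of_le_of_ne (zero_le : 0 ≤ c) (Ne.symm hc0)
          calc (⊥ : m.syn) = m.toSyn 0 := by rw [map_zero]; rfl
            _ < m.toSyn c := m.toSyn_strictMono hpos
        have hdec : ((p'.support.filter fun d => 2 ≤ muDeg d).sup m.toSyn) < N := by
          rw [hNc]
          refine (Finset.sup_lt_iff hbot).mpr ?_
          intro d hd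
          rw [Finset.mem_filter] at hd
          rcases Finset.mem_union.mp (hp'supp hd.1) with h1 | h1
          · have hdS : d ∈ S := by rw [hS, Finset.mem_filter]; exact ⟨h1, hd.2⟩
            have hle : m.toSyn d ≤ m.toSyn c := by rw [← hcsup]; exact Finset.le_sup hdS
            refine lt_of_le_of_ne hle (fun h => ?_)
            have h2 := m.toSyn.injective h
            rw [h2] at hd
            exact (MvPolynomial.mem_support_iff.mp hd.1) hp'c
          · rcases hgle d h1 with rfl | h2
            · exact absurd hp'c (MvPolynomial.mem_support_iff.mp hd.1)
            · exact h2
        have hres := ih _ hdec p' rfl hp'I hp'0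
        rw [hlead'] at hres
        omega
  apply le_antisymm
  · rw [Ideal.span_le]
    rintro q ⟨p, hpI, hp0, rfl⟩
    have h2 := key _ p rfl hpI hp0
    obtain ⟨i, j, hij, hle⟩ := exists_div h2
    have heq : (monomial (leadMon m p)) (1 : C) =
        monomial (leadMon m p - (Finsupp.single (some i) 1 + Finsupp.single (some j) 1))
          1 * (X (some i) * X (some j)) := by
      rw [hXX i j, monomial_mul, one_mul, tsub_add_cancel_of_le hle]
    rw [heq]
    exact Ideal.mul_mem_left _ _ (Ideal.subset_span ⟨i, j, hij, rfl⟩)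
  · rw [Ideal.span_le]
    rintro q ⟨i, j, hij, rfl⟩
    refine Ideal.subset_span ⟨R i j, hRI i j hij, hRne i j, ?_⟩
    rw [hlead i j, hXX i j]
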